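/- arXiv:0811.0503 — 2 statements merged into one kernel-verified Lean document; each statement's English description precedes it below -/
import Mathlib

section
/- Assume g satisfies condition G1. Let θ₀ = (μ₀,Σ₀) ∈ Θ and let A ⊆ ℝ^p be an open set with μ₀ ∈ A. Then for every θ ∈ Θ with θ ≠ θ₀ and every real k > 0, P_{θ₀}({x ∈ A : f_θ(x) ≠ k·f_{θ₀}(x)}) > 0. -/
open MeasureTheory Matrix Filter Set
open scoped RealInnerProductSpace ENNReal

noncomputable section

/-- The quadratic form `vᵀ S⁻¹ v`. -/
def quadForm {p : ℕ} (S : Matrix (Fin p) (Fin p) ℝ) (v : EuclideanSpace ℝ (Fin p)) : ℝ :=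
  ⟪v, Matrix.toEuclideanLin S⁻¹ v⟫

/-- The elliptical density `det(S)^{-1/2} g((x-μ)ᵀ S⁻¹ (x-μ))`. -/
def ellDensity {p : ℕ} (g : ℝ → ℝ) (μ : EuclideanSpace ℝ (Fin p))
    (S : Matrix (Fin p) (Fin p) ℝ) (x : EuclideanSpace ℝ (Fin p)) : ℝ :=
  (Real.sqrt S.det)⁻¹ * g (quadForm S (x - μ))

/-- The elliptical probability measure `P_θ`, `θ = (μ, S)`. -/
def ellMeasure {p : ℕ} (g : ℝ → ℝ) (μ : EuclideanSpace ℝ (Fin p))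
    (S : Matrix (Fin p) (Fin p) ℝ) : Measure (EuclideanSpace ℝ (Fin p)) :=
  volume.withDensity fun x => ENNReal.ofReal (ellDensity g μ S x)

/-- Condition G1: a strictly decreasing sequence tending to 0 on which `g` strictly increases. -/
def CondG1 (g : ℝ → ℝ) : Prop :=
  ∃ t : ℕ → ℝ, StrictAnti t ∧ Tendsto t atTop (nhds 0) ∧ (∀ n, 0 < t n) ∧
    ∀ n, g (t n) < g (t (n + 1))

/-!
Suppose the set had `P_{θ₀}`-measure zero. Near `μ₀` the density `f_{θ₀}` is positive, so there
`g (q x) = K * g (q₀ x)` almost everywhere, where `q`, `q₀` are the quadratic forms centred at `μ`,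
`μ₀` and `K > 0`. Condition G1 provides points `s`, arbitrarily close to `0`, across which `g`
drops strictly; comparing the relation on the open sets `{q₀ < s}` and `{q₀ > s}` shows that `q`
cannot decrease across the level set `{q₀ = s}`. At arbitrarily small such `s` this forces
`μ = μ₀` and `q = κ q₀`. The relation then reads `g (κ t) = K * g t` for a dense set of small `t`.
As `g` is bounded and positive near `0`, this gives `K = 1`, and one more drop point gives
`κ = 1`, i.e. `S = S₀`.
-/

open Topology

section QuadForm
variable {p : ℕ}

lemma quadForm_smul (S : Matrix (Fin p) (Fin p) ℝ) (c : ℝ) (v : EuclideanSpace ℝ (Fin p)) :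
    quadForm S (c • v) = c ^ 2 * quadForm S v := by
  simp only [quadForm, map_smul, real_inner_smul_left, real_inner_smul_right]
  ring

lemma quadForm_sqrt_smul (S : Matrix (Fin p) (Fin p) ℝ) {a : ℝ} (ha : 0 ≤ a)
    (v : EuclideanSpace ℝ (Fin p)) : quadForm S (√a • v) = a * quadForm S v := by
  rw [quadForm_smul, Real.sq_sqrt ha]

lemma quadForm_zero (S : Matrix (Fin p) (Fin p) ℝ) : quadForm S 0 = 0 := by
  simp [quadForm]

lemma continuous_quadForm (S : Matrix (Fin p) (Fin p) ℝ) : Continuous (quadForm S) :=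
  continuous_id.inner (LinearMap.continuous_of_finiteDimensional _)

lemma continuous_quadForm_sub (S : Matrix (Fin p) (Fin p) ℝ) (m : EuclideanSpace ℝ (Fin p)) :
    Continuous fun x => quadForm S (x - m) :=
  (continuous_quadForm S).comp (continuous_sub_right m)

variable {S : Matrix (Fin p) (Fin p) ℝ}

lemma Matrix.PosDef.quadForm_pos (hS : S.PosDef) {v : EuclideanSpace ℝ (Fin p)} (hv : v ≠ 0) :
    0 < quadForm S v := by
  rw [quadForm, EuclideanSpace.inner_eq_star_dotProduct, toLpLin_apply, WithLp.ofLp_toLp,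
    star_trivial, dotProduct_comm]
  exact hS.inv.dotProduct_mulVec_pos (by simpa using hv)

lemma Matrix.PosDef.quadForm_nonneg (hS : S.PosDef) (v : EuclideanSpace ℝ (Fin p)) :
    0 ≤ quadForm S v := by
  rcases eq_or_ne v 0 with rfl | hv
  · rw [quadForm_zero]
  · exact (hS.quadForm_pos hv).le

lemma eq_of_quadForm_eq {S₀ : Matrix (Fin p) (Fin p) ℝ} (hS : S.IsHermitian)
    (hS₀ : S₀.IsHermitian) (hdet : IsUnit S.det) (hdet₀ : IsUnit S₀.det)
    (h : quadForm S = quadForm S₀) : S = S₀ := by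
  have hsymm : (toEuclideanLin (S⁻¹ - S₀⁻¹)).IsSymmetric :=
    isSymmetric_toEuclideanLin_iff.mpr (hS.inv.sub hS₀.inv)
  have hzero : toEuclideanLin (S⁻¹ - S₀⁻¹) = 0 := hsymm.inner_map_self_eq_zero.mp fun v => by
    rw [real_inner_comm, map_sub, LinearMap.sub_apply, inner_sub_right]
    exact sub_eq_zero.mpr (congrFun h v)
  have hinv : S⁻¹ = S₀⁻¹ := sub_eq_zero.mp (toEuclideanLin.map_eq_zero_iff.mp hzero)
  rw [← nonsing_inv_nonsing_inv S hdet, hinv, nonsing_inv_nonsing_inv S₀ hdet₀]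

end QuadForm

def IsDropPoint (g : ℝ → ℝ) (s : ℝ) : Prop :=
  ∀ ⦃a b : ℝ⦄, 0 ≤ a → a < s → s < b → g b < g a

section Antitone
variable {g : ℝ → ℝ}

lemma AntitoneOn.exists_isDropPoint (hg : AntitoneOn g (Ici 0)) {a b : ℝ} (ha : 0 ≤ a)
    (hab : a ≤ b) (hgab : g b < g a) : ∃ s ∈ Icc a b, IsDropPoint g s := by
  set T := {x | 0 ≤ x ∧ g b < g x}
  have haT : a ∈ T := ⟨ha, hgab⟩
  have hbT : b ∈ upperBounds T := fun x hx => by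
    by_contra! hbx
    exact (hg (ha.trans hab) hx.1 hbx.le).not_gt hx.2
  refine ⟨sSup T, ⟨le_csSup ⟨b, hbT⟩ haT, csSup_le ⟨a, haT⟩ hbT⟩, ?_⟩
  intro a' b' ha' ha's hsb'
  obtain ⟨x, hxT, ha'x⟩ := exists_lt_of_lt_csSup ⟨a, haT⟩ ha's
  have hb' : 0 ≤ b' := ha'.trans (ha's.trans hsb').le
  have hb'T : b' ∉ T := fun h => (le_csSup ⟨b, hbT⟩ h).not_gt hsb'
  calc g b' ≤ g b := not_lt.mp fun h => hb'T ⟨hb', h⟩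
    _ < g x := hxT.2
    _ ≤ g a' := hg ha' hxT.1 ha'x.le

lemma CondG1.frequently_isDropPoint (hG1 : CondG1 g) (hg : AntitoneOn g (Ici 0)) :
    ∃ᶠ s in 𝓝[>] 0, IsDropPoint g s := by
  obtain ⟨t, ht_anti, ht_lim, ht_pos, ht_incr⟩ := hG1
  rw [(nhdsGT_basis (0 : ℝ)).frequently_iff]
  intro ε hε
  obtain ⟨n, hn⟩ := (ht_lim.eventually_lt_const hε).exists
  obtain ⟨s, hs, hdrop⟩ :=
    hg.exists_isDropPoint (ht_pos (n + 1)).le (ht_anti n.lt_succ_self).le (ht_incr n)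
  exact ⟨s, ⟨(ht_pos _).trans_le hs.1, hs.2.trans_lt hn⟩, hdrop⟩

lemma AntitoneOn.exists_lim_at_zero (hg : AntitoneOn g (Ici 0)) :
    ∃ L, (∀ x > 0, g x ≤ L) ∧ ∀ η < L, ∃ δ > 0, ∀ x ∈ Icc 0 δ, η < g x := by
  have hbdd : BddAbove (g '' Ioi 0) := ⟨g 0, by
    rintro _ ⟨x, hx, rfl⟩
    exact hg (mem_Ici.mpr le_rfl) (mem_Ici.mpr hx.le) hx.le⟩
  refine ⟨sSup (g '' Ioi 0), fun x hx => le_csSup hbdd (mem_image_of_mem g hx), fun η hη => ?_⟩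
  obtain ⟨_, ⟨δ, hδ, rfl⟩, hηδ⟩ := exists_lt_of_lt_csSup (nonempty_Ioi.image g) hη
  exact ⟨δ, hδ, fun x hx => hηδ.trans_le (hg hx.1 (mem_Ici.mpr hδ.le) hx.2)⟩

lemma factor_eq_one_of_forall_exists_eq_mul (hg : AntitoneOn g (Ici 0)) {c : ℝ} (hc : 0 < c)
    (hgc : 0 < g c) {κ K ρ : ℝ} (hκ : 0 < κ) (hK : 0 < K) (hρ : 0 < ρ)
    (h : ∀ a b, 0 < a → a < b → b ≤ ρ → ∃ t ∈ Ioo a b, g (κ * t) = K * g t) : K = 1 := by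
  obtain ⟨L, hle, hlt⟩ := hg.exists_lim_at_zero
  have hL : 0 < L := hgc.trans_le (hle c hc)
  have hsmall : ∀ δ > 0, ∃ t, 0 < t ∧ t < δ ∧ g (κ * t) = K * g t := fun δ hδ => by
    have hm : 0 < min δ ρ := lt_min hδ hρ
    obtain ⟨t, ht, heq⟩ := h _ _ (half_pos hm) (half_lt_self hm) (min_le_right _ _)
    exact ⟨t, (half_pos hm).trans ht.1, ht.2.trans_le (min_le_left _ _), heq⟩
  -- `g (κ * t)` and `g t` both tend to `L > 0` as `t → 0⁺`, which leaves no room for `K ≠ 1`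
  rcases lt_trichotomy K 1 with hK1 | hK1 | hK1
  · obtain ⟨δ, hδ, hδη⟩ := hlt (K * L) (by nlinarith)
    obtain ⟨t, ht0, htδ, heq⟩ := hsmall (δ / κ) (div_pos hδ hκ)
    have h1 : K * L < g (κ * t) :=
      hδη _ ⟨by positivity, by rw [lt_div_iff₀ hκ] at htδ; linarith⟩
    have h2 : K * g t ≤ K * L := mul_le_mul_of_nonneg_left (hle t ht0) hK.le
    linarith
  · exact hK1
  · obtain ⟨δ, hδ, hδη⟩ := hlt (L / K) (div_lt_self hL hK1)
    obtain ⟨t, ht0, htδ, heq⟩ := hsmall δ hδ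
    have h1 : L < K * g t := (div_lt_iff₀' hK).mp (hδη t ⟨ht0.le, htδ.le⟩)
    have h2 : g (κ * t) ≤ L := hle _ (mul_pos hκ ht0)
    linarith

lemma scale_eq_one_of_forall_exists_eq_mul (hg : AntitoneOn g (Ici 0)) (hG1 : CondG1 g)
    {c : ℝ} (hc : 0 < c) (hgc : 0 < g c) {κ K ρ : ℝ} (hκ : 0 < κ) (hK : 0 < K) (hρ : 0 < ρ)
    (h : ∀ a b, 0 < a → a < b → b ≤ ρ → ∃ t ∈ Ioo a b, g (κ * t) = K * g t) : κ = 1 := by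
  obtain rfl := factor_eq_one_of_forall_exists_eq_mul hg hc hgc hκ hK hρ h
  have hdrop := hG1.frequently_isDropPoint hg
  rcases lt_trichotomy κ 1 with hκ1 | hκ1 | hκ1
  · obtain ⟨s, hs, hs0, hsρ⟩ := (hdrop.and_eventually (Ioo_mem_nhdsGT (mul_pos hκ hρ))).exists
    obtain ⟨t, ⟨hst, hts⟩, heq⟩ := h s (s / κ) hs0 ((lt_div_iff₀ hκ).mpr (by nlinarith))
      ((div_le_iff₀ hκ).mpr (by linarith))
    have ht : 0 < t := hs0.trans hst
    rw [lt_div_iff₀ hκ, mul_comm] at hts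
    exact absurd (heq.trans (one_mul _)) (hs (mul_pos hκ ht).le hts hst).ne'
  · exact hκ1
  · obtain ⟨s, hs, hs0, hsρ⟩ := (hdrop.and_eventually (Ioo_mem_nhdsGT hρ)).exists
    obtain ⟨t, ⟨hst, hts⟩, heq⟩ := h (s / κ) s (div_pos hs0 hκ) (div_lt_self hs0 hκ1) hsρ.le
    have ht : 0 < t := (div_pos hs0 hκ).trans hst
    rw [div_lt_iff₀ hκ, mul_comm] at hst
    exact absurd (heq.trans (one_mul _)) (hs ht.le hts hst).ne

end Antitone

section Measure
variable {X : Type*} [MeasurableSpace X]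

lemma measure_inter_eq_zero_of_withDensity_eq_zero {μ : Measure X} {f : X → ℝ≥0∞} {B E : Set X}
    (hB : MeasurableSet B) {c : ℝ≥0∞} (hc : c ≠ 0) (hcf : ∀ x ∈ B, c ≤ f x)
    (h : μ.withDensity f E = 0) : μ (B ∩ E) = 0 := by
  have hle : c * μ (B ∩ E) ≤ μ.withDensity f E := calc
    c * μ (B ∩ E) = ∫⁻ x in E, B.indicator (fun _ => c) x ∂μ := by
      rw [lintegral_indicator_const hB, Measure.restrict_apply hB]
    _ ≤ ∫⁻ x in E, f x ∂μ := lintegral_mono (indicator_le hcf)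
    _ ≤ μ.withDensity f E := withDensity_apply_le f E
  rw [h, nonpos_iff_eq_zero, mul_eq_zero] at hle
  exact hle.resolve_left hc

variable [TopologicalSpace X] {μ : Measure X} [μ.IsOpenPosMeasure]

lemma exists_mem_of_ae_imp {B U : Set X} {P : X → Prop} (h : ∀ᵐ x ∂μ, x ∈ B → P x)
    (hU : IsOpen U) (hUB : U ⊆ B) (hne : U.Nonempty) : ∃ x ∈ U, P x := by
  by_contra! hno
  have hsub : U ⊆ {x | ¬(x ∈ B → P x)} := fun x hx himp => hno x hx (himp (hUB hx))
  exact (hU.measure_pos μ hne).ne' (measure_mono_null hsub (ae_iff.mp h))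

lemma le_of_isDropPoint {g : ℝ → ℝ} (hg : AntitoneOn g (Ici 0)) {s : ℝ} (hs : IsDropPoint g s)
    {f f₀ : X → ℝ} (hf : Continuous f) (hf₀ : Continuous f₀) (hf_nonneg : ∀ x, 0 ≤ f x)
    (hf₀_nonneg : ∀ x, 0 ≤ f₀ x) {B : Set X} (hB : IsOpen B) {K : ℝ} (hK : 0 < K)
    (hgood : ∀ᵐ x ∂μ, x ∈ B → g (f x) = K * g (f₀ x)) {x y : X} (hx : x ∈ B) (hy : y ∈ B)
    (hxs : f₀ x < s) (hsy : s < f₀ y) : f x ≤ f y := by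
  by_contra! hyx
  obtain ⟨c, hyc, hcx⟩ := exists_between hyx
  obtain ⟨x', ⟨⟨-, hx's⟩, hcx'⟩, hx'⟩ := exists_mem_of_ae_imp hgood
    ((hB.inter (isOpen_lt hf₀ continuous_const)).inter (isOpen_lt continuous_const hf))
    (fun z hz => hz.1.1) ⟨x, ⟨hx, hxs⟩, hcx⟩
  obtain ⟨y', ⟨⟨-, hsy'⟩, hy'c⟩, hy'⟩ := exists_mem_of_ae_imp hgood
    ((hB.inter (isOpen_lt continuous_const hf₀)).inter (isOpen_lt hf continuous_const))
    (fun z hz => hz.1.1) ⟨y, ⟨hy, hsy⟩, hyc⟩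
  have h1 : g (f x') ≤ g (f y') := hg (hf_nonneg _) (hf_nonneg _) (hy'c.trans hcx').le
  rw [hx', hy'] at h1
  exact (hs (hf₀_nonneg _) hx's hsy').not_ge (le_of_mul_le_mul_left h1 hK)

end Measure

lemma exists_pos_of_integral_pos {E : Type*} [NormedAddCommGroup E] [MeasurableSpace E]
    {μ : Measure E} [NullSingletonClass μ] {g : ℝ → ℝ} (h : 0 < ∫ x, g (‖x‖ ^ 2) ∂μ) :
    ∃ c > 0, 0 < g c := by
  by_contra! hg
  have hle : ∀ᵐ x ∂μ, g (‖x‖ ^ 2) ≤ 0 := by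
    filter_upwards [measure_eq_zero_iff_ae_notMem.mp (measure_singleton (0 : E))] with x hx
    exact hg _ (pow_pos (norm_pos_iff.mpr hx) 2)
  exact h.not_ge (integral_nonpos_of_ae hle)

lemma eventually_add_sqrt_smul_mem {E : Type*} [AddCommGroup E] [Module ℝ E] [TopologicalSpace E]
    [ContinuousAdd E] [ContinuousSMul ℝ E] {B : Set E} (hB : IsOpen B) {x : E} (hx : x ∈ B)
    (m : ℝ) (u : E) : ∀ᶠ s in 𝓝 (0 : ℝ), x + √(s / m) • u ∈ B := by
  have hcont : Continuous fun s : ℝ => x + √(s / m) • u := by fun_prop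
  exact hcont.tendsto' 0 x (by simp) (hB.mem_nhds hx)

section Ellipsoid
variable {p : ℕ} {S S₀ : Matrix (Fin p) (Fin p) ℝ} {B : Set (EuclideanSpace ℝ (Fin p))}
  {μ μ₀ : EuclideanSpace ℝ (Fin p)}

lemma eq_of_frequently_quadForm_le (hS : S.PosDef) (hS₀ : S₀.PosDef) (hB : IsOpen B)
    (hμ₀ : μ₀ ∈ B)
    (h : ∃ᶠ s in 𝓝[>] 0, ∀ x ∈ B, ∀ y ∈ B, quadForm S₀ (x - μ₀) < s →
      s < quadForm S₀ (y - μ₀) → quadForm S (x - μ) ≤ quadForm S (y - μ)) :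
    μ = μ₀ := by
  by_contra hne
  set d := μ - μ₀
  have hd : d ≠ 0 := sub_ne_zero.mpr hne
  -- on the segment from `μ₀` towards `μ`, `quadForm S (· - μ)` decreases while
  -- `quadForm S₀ (· - μ₀)` increases
  obtain ⟨r, ⟨hr0, hr1⟩, hrB⟩ : ∃ r ∈ Ioo (0 : ℝ) 1, μ₀ + √(r / 1) • d ∈ B :=
    (Filter.Eventually.and (Ioo_mem_nhdsGT one_pos)
      (nhdsWithin_le_nhds (eventually_add_sqrt_smul_mem hB hμ₀ 1 d))).exists
  rw [div_one] at hrB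
  have hsqrt : 0 < √r := Real.sqrt_pos.mpr hr0
  have hpos : 0 < quadForm S₀ (√r • d) := hS₀.quadForm_pos (smul_ne_zero hsqrt.ne' hd)
  obtain ⟨s, hs, hs0, hslt⟩ := (h.and_eventually (Ioo_mem_nhdsGT hpos)).exists
  have hle := hs μ₀ hμ₀ _ hrB (by rwa [sub_self, quadForm_zero]) (by rwa [add_sub_cancel_left])
  have e1 : μ₀ - μ = (-1 : ℝ) • d := by simp [d]
  have e2 : μ₀ + √r • d - μ = (√r - 1) • d := by simp only [d, sub_smul, one_smul]; abel
  rw [e1, e2, quadForm_smul, quadForm_smul] at hle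
  have hr : √r < 1 := (Real.sqrt_lt' one_pos).mpr (by rwa [one_pow])
  nlinarith [mul_pos (mul_pos hsqrt (by linarith : 0 < 2 - √r)) (hS.quadForm_pos hd)]

lemma quadForm_le_of_frequently_quadForm_le (hS₀ : S₀.PosDef) (hB : IsOpen B) (hμ₀ : μ₀ ∈ B)
    (h : ∃ᶠ s in 𝓝[>] 0, ∀ x ∈ B, ∀ y ∈ B, quadForm S₀ (x - μ₀) < s →
      s < quadForm S₀ (y - μ₀) → quadForm S (x - μ₀) ≤ quadForm S (y - μ₀))
    {v w : EuclideanSpace ℝ (Fin p)} (hvw : quadForm S₀ v < quadForm S₀ w) :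
    quadForm S v ≤ quadForm S w := by
  obtain ⟨m, hvm, hmw⟩ := exists_between hvw
  have hm : 0 < m := (hS₀.quadForm_nonneg v).trans_lt hvm
  obtain ⟨s, hs, hs0, hvB, hwB⟩ := (h.and_eventually (Filter.Eventually.and self_mem_nhdsWithin
    (nhdsWithin_le_nhds ((eventually_add_sqrt_smul_mem hB hμ₀ m v).and
      (eventually_add_sqrt_smul_mem hB hμ₀ m w))))).exists
  -- rescaled by `√(s / m)`, `v` and `w` lie on either side of the level `s` of `quadForm S₀`
  have hsm : 0 < s / m := div_pos hs0 hm
  have hscale : ∀ (T : Matrix (Fin p) (Fin p) ℝ) u,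
      quadForm T (μ₀ + √(s / m) • u - μ₀) = s / m * quadForm T u := fun T u => by
    rw [add_sub_cancel_left, quadForm_sqrt_smul _ hsm.le]
  have hv' : s / m * quadForm S₀ v < s := by
    calc s / m * quadForm S₀ v < s / m * m := mul_lt_mul_of_pos_left hvm hsm
      _ = s := div_mul_cancel₀ s hm.ne'
  have hw' : s < s / m * quadForm S₀ w := by
    calc s = s / m * m := (div_mul_cancel₀ s hm.ne').symm
      _ < s / m * quadForm S₀ w := mul_lt_mul_of_pos_left hmw hsm
  have hle := hs _ hvB _ hwB (by rwa [hscale]) (by rwa [hscale])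
  rw [hscale, hscale] at hle
  exact le_of_mul_le_mul_left hle hsm

lemma quadForm_mul_le_of_monotone (hS : S.PosDef) (hS₀ : S₀.PosDef)
    (h : ∀ v w, quadForm S₀ v < quadForm S₀ w → quadForm S v ≤ quadForm S w)
    (v w : EuclideanSpace ℝ (Fin p)) :
    quadForm S v * quadForm S₀ w ≤ quadForm S w * quadForm S₀ v := by
  by_contra! hlt
  have hv : v ≠ 0 := by rintro rfl; simp [quadForm_zero] at hlt
  have hQv := hS.quadForm_pos hv
  have hQ₀v := hS₀.quadForm_pos hv
  obtain ⟨a, ha1, ha2⟩ : ∃ a, quadForm S w / quadForm S v < a ∧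
      a < quadForm S₀ w / quadForm S₀ v :=
    exists_between (by rw [div_lt_div_iff₀ hQv hQ₀v]; linarith)
  have ha : 0 < a := (div_nonneg (hS.quadForm_nonneg w) hQv.le).trans_lt ha1
  have hle := h (√a • v) w (by rw [quadForm_sqrt_smul _ ha.le]; rwa [lt_div_iff₀ hQ₀v] at ha2)
  rw [quadForm_sqrt_smul _ ha.le] at hle
  rw [div_lt_iff₀ hQv] at ha1
  linarith

lemma exists_quadForm_eq_mul (hp : 1 ≤ p) (hS : S.PosDef) (hS₀ : S₀.PosDef)
    (h : ∀ v w, quadForm S₀ v < quadForm S₀ w → quadForm S v ≤ quadForm S w) :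
    ∃ κ > 0, ∀ v, quadForm S v = κ * quadForm S₀ v := by
  have : Nonempty (Fin p) := ⟨⟨0, hp⟩⟩
  obtain ⟨v₀, hv₀⟩ := exists_ne (0 : EuclideanSpace ℝ (Fin p))
  have hQ₀v₀ := hS₀.quadForm_pos hv₀
  refine ⟨quadForm S v₀ / quadForm S₀ v₀, div_pos (hS.quadForm_pos hv₀) hQ₀v₀, fun v => ?_⟩
  have := le_antisymm (quadForm_mul_le_of_monotone hS hS₀ h v v₀)
    (quadForm_mul_le_of_monotone hS hS₀ h v₀ v)
  field_simp
  linarith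

lemma exists_forall_exists_mem_Ioo_of_ae (hp : 1 ≤ p) (hS₀ : S₀.PosDef) (hB : IsOpen B)
    (hμ₀ : μ₀ ∈ B) {P : ℝ → Prop} (h : ∀ᵐ x, x ∈ B → P (quadForm S₀ (x - μ₀))) :
    ∃ ρ > 0, ∀ a b, 0 < a → a < b → b ≤ ρ → ∃ t ∈ Ioo a b, P t := by
  have : Nonempty (Fin p) := ⟨⟨0, hp⟩⟩
  obtain ⟨v, hv⟩ := exists_ne (0 : EuclideanSpace ℝ (Fin p))
  have hQv := hS₀.quadForm_pos hv
  obtain ⟨ρ, hρ, hρB⟩ :=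
    Metric.eventually_nhds_iff_ball.mp (eventually_add_sqrt_smul_mem hB hμ₀ (quadForm S₀ v) v)
  refine ⟨ρ, hρ, fun a b ha hab hb => ?_⟩
  obtain ⟨m, ham, hmb⟩ := exists_between hab
  have hm : 0 < m := ha.trans ham
  have hmem : μ₀ + √(m / quadForm S₀ v) • v ∈ B := hρB m (by
    rw [Metric.mem_ball, dist_zero_right, Real.norm_of_nonneg hm.le]; linarith)
  have hQm : quadForm S₀ (μ₀ + √(m / quadForm S₀ v) • v - μ₀) = m := by
    rw [add_sub_cancel_left, quadForm_sqrt_smul _ (div_pos hm hQv).le, div_mul_cancel₀ _ hQv.ne']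
  obtain ⟨x, ⟨-, hx⟩, hPx⟩ := exists_mem_of_ae_imp h
    (hB.inter (isOpen_Ioo.preimage (continuous_quadForm_sub S₀ μ₀)))
    inter_subset_left ⟨_, hmem, by rw [mem_preimage, hQm]; exact ⟨ham, hmb⟩⟩
  exact ⟨_, hx, hPx⟩

lemma ae_eq_mul_of_ellMeasure_eq_zero {g : ℝ → ℝ} (hg : AntitoneOn g (Ici 0)) (hS : S.PosDef)
    (hS₀ : S₀.PosDef) {c : ℝ} (hc : 0 ≤ c) (hgc : 0 < g c) {A : Set (EuclideanSpace ℝ (Fin p))}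
    (hA : MeasurableSet A) {k : ℝ}
    (h : ellMeasure g μ₀ S₀ {x | x ∈ A ∧ ellDensity g μ S x ≠ k * ellDensity g μ₀ S₀ x} = 0) :
    ∀ᵐ x, x ∈ A ∩ {x | quadForm S₀ (x - μ₀) < c} →
      g (quadForm S (x - μ)) = k * √S.det / √S₀.det * g (quadForm S₀ (x - μ₀)) := by
  have hB : MeasurableSet (A ∩ {x | quadForm S₀ (x - μ₀) < c}) :=
    hA.inter (measurableSet_lt (continuous_quadForm_sub S₀ μ₀).measurable measurable_const)
  have hd₀ : 0 < √S₀.det := Real.sqrt_pos.mpr hS₀.det_pos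
  have hd : 0 < √S.det := Real.sqrt_pos.mpr hS.det_pos
  have hnull := measure_inter_eq_zero_of_withDensity_eq_zero hB
    (c := ENNReal.ofReal ((√S₀.det)⁻¹ * g c)) (ENNReal.ofReal_pos.mpr (by positivity)).ne'
    (fun x hx => ENNReal.ofReal_le_ofReal
      (mul_le_mul_of_nonneg_left (hg (hS₀.quadForm_nonneg _) hc hx.2.le) (by positivity))) h
  filter_upwards [measure_eq_zero_iff_ae_notMem.mp hnull] with x hx hxB
  have heq : ellDensity g μ S x = k * ellDensity g μ₀ S₀ x :=
    not_not.mp fun hne => hx ⟨hxB, hxB.1, hne⟩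
  rw [ellDensity, ellDensity] at heq
  field_simp at heq ⊢
  linarith

end Ellipsoid

theorem ell_identifiable_on_open {p : ℕ} (hp : 1 ≤ p) (g : ℝ → ℝ)
    (hmono : AntitoneOn g (Set.Ici 0))
    (hnorm : ∫ x : EuclideanSpace ℝ (Fin p), g (‖x‖ ^ 2) = 1)
    (hG1 : CondG1 g)
    (μ₀ : EuclideanSpace ℝ (Fin p)) (S₀ : Matrix (Fin p) (Fin p) ℝ) (hS₀ : S₀.PosDef)
    (A : Set (EuclideanSpace ℝ (Fin p))) (hA : IsOpen A) (hμ₀ : μ₀ ∈ A)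
    (μ : EuclideanSpace ℝ (Fin p)) (S : Matrix (Fin p) (Fin p) ℝ) (hS : S.PosDef)
    (hne : (μ, S) ≠ (μ₀, S₀)) (k : ℝ) (hk : 0 < k) :
    0 < ellMeasure g μ₀ S₀
      {x | x ∈ A ∧ ellDensity g μ S x ≠ k * ellDensity g μ₀ S₀ x} := by
  have : Nonempty (Fin p) := ⟨⟨0, hp⟩⟩
  obtain ⟨c, hc, hgc⟩ :=
    exists_pos_of_integral_pos (μ := volume) (g := g) (by rw [hnorm]; exact one_pos)
  by_contra h0
  set B := A ∩ {x | quadForm S₀ (x - μ₀) < c}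
  have hB : IsOpen B := hA.inter (isOpen_lt (continuous_quadForm_sub S₀ μ₀) continuous_const)
  have hμ₀B : μ₀ ∈ B := ⟨hμ₀, by simpa [quadForm_zero] using hc⟩
  have hK : 0 < k * √S.det / √S₀.det := by
    have := hS.det_pos; have := hS₀.det_pos; positivity
  have hgood := ae_eq_mul_of_ellMeasure_eq_zero hmono hS hS₀ hc.le hgc hA.measurableSet
    (nonpos_iff_eq_zero.mp (not_lt.mp h0))
  have hcross : ∃ᶠ s in 𝓝[>] 0, ∀ x ∈ B, ∀ y ∈ B, quadForm S₀ (x - μ₀) < s →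
      s < quadForm S₀ (y - μ₀) → quadForm S (x - μ) ≤ quadForm S (y - μ) :=
    (hG1.frequently_isDropPoint hmono).mono fun s hs x hx y hy =>
      le_of_isDropPoint hmono hs (continuous_quadForm_sub S μ) (continuous_quadForm_sub S₀ μ₀)
        (fun _ => hS.quadForm_nonneg _)
        (fun _ => hS₀.quadForm_nonneg _) hB hK hgood hx hy
  obtain rfl : μ = μ₀ := eq_of_frequently_quadForm_le hS hS₀ hB hμ₀B hcross
  obtain ⟨κ, hκ, hQ⟩ := exists_quadForm_eq_mul hp hS hS₀ fun _ _ =>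
    quadForm_le_of_frequently_quadForm_le hS₀ hB hμ₀B hcross
  obtain ⟨ρ, hρ, hdense⟩ := exists_forall_exists_mem_Ioo_of_ae hp hS₀ hB hμ₀B
    (P := fun t => g (κ * t) = k * √S.det / √S₀.det * g t)
    (hgood.mono fun x hx hxB => by rw [← hQ]; exact hx hxB)
  have hκ1 := scale_eq_one_of_forall_exists_eq_mul hmono hG1 hc hgc hκ hK hρ hdense
  refine hne (congrArg _ (eq_of_quadForm_eq hS.isHermitian hS₀.isHermitian
    hS.det_pos.ne'.isUnit hS₀.det_pos.ne'.isUnit (funext fun v => ?_)))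
  rw [hQ, hκ1, one_mul]
end
end

section
/- Let λ be a σ-finite measure on ℝ^p, T = (T_1,…,T_d) : ℝ^p → ℝ^d and h : ℝ^p → [0,∞) Borel measurable, and let A ⊆ ℝ^p be Borel. Assume that for every a ∈ ℝ^d with a ≠ 0 and every b ∈ ℝ, λ({x ∈ A : h(x) > 0 and ⟨a,T(x)⟩ ≠ b}) > 0. Let P be a probability measure on ℝ^p with P(A) > 0 and ∫_A |T_j| dP < ∞ for every j. Define D_A := {θ ∈ ℝ^d : ∫_A exp(⟨θ,T(x)⟩)·h(x) λ(dx) < ∞} and, for θ ∈ D_A, M(θ) := ⟨θ, ∫_A T dP⟩ − P(A)·log ∫_A exp(⟨θ,T⟩)·h dλ. Then M has at most one maximizer on D_A: if θ₁,θ₂ ∈ D_A satisfy M(θ_i) ≥ M(θ) for all θ ∈ D_A (i = 1,2), then θ₁ = θ₂. -/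
/-!
Write `θ₁ = m + a`, `θ₂ = m - a` with `a ≠ 0`. The linear part of `M` is affine in `θ`, so it
suffices that `log Z` is strictly midpoint convex. Against the tilted measure `μ_m` with density
`exp ⟨m, T⟩ h` on `A`, `Z(m ± a) = ∫ exp (±⟨a, T⟩) dμ_m` and `Z(m) = μ_m(univ)`; Jensen's
inequality for `exp`, applied to `⟨a, T⟩` and `-⟨a, T⟩`, gives `Z(m)² < Z(m + a) Z(m - a)`,
strictly because the non-degeneracy hypothesis says `⟨a, T⟩` is not `μ_m`-a.e. constant.
Since `1 ≤ eᵗ + e⁻ᵗ`, also `Z(m) ≤ Z(m + a) + Z(m - a) < ∞`, so `m` competes with `θ₁, θ₂` and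
`M(m) > (M(θ₁) + M(θ₂)) / 2` contradicts their maximality.
-/

open MeasureTheory Set
open scoped ENNReal

noncomputable section

/-- The truncated partition function `Z(θ) = ∫_A exp(⟨θ, T x⟩) h x dλ(x)`. -/
def truncZ {p d : ℕ} (lam : Measure (EuclideanSpace ℝ (Fin p)))
    (T : EuclideanSpace ℝ (Fin p) → Fin d → ℝ) (h : EuclideanSpace ℝ (Fin p) → ℝ)
    (A : Set (EuclideanSpace ℝ (Fin p))) (θ : Fin d → ℝ) : ℝ≥0∞ :=
  ∫⁻ x in A, ENNReal.ofReal (Real.exp (∑ j, θ j * T x j) * h x) ∂lam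

/-- The expected truncated log-likelihood (up to an additive constant)
`M(θ) = ⟨θ, ∫_A T dP⟩ − P(A) · log Z(θ)`. -/
def truncM {p d : ℕ} (lam : Measure (EuclideanSpace ℝ (Fin p)))
    (T : EuclideanSpace ℝ (Fin p) → Fin d → ℝ) (h : EuclideanSpace ℝ (Fin p) → ℝ)
    (A : Set (EuclideanSpace ℝ (Fin p))) (P : Measure (EuclideanSpace ℝ (Fin p)))
    (θ : Fin d → ℝ) : ℝ :=
  (∑ j, θ j * ∫ x in A, T x j ∂P) - (P A).toReal * Real.log (truncZ lam T h A θ).toReal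

open Real Matrix

lemma Measurable.const_dotProduct {α n : Type*} [MeasurableSpace α] [Fintype n]
    {f : α → n → ℝ} (hf : Measurable f) (v : n → ℝ) : Measurable fun x => v ⬝ᵥ f x :=
  (continuous_const.dotProduct continuous_id).measurable.comp hf

section ExpAndExpNeg

variable {α : Type*} [MeasurableSpace α] {μ : Measure α} {u : α → ℝ}

lemma one_le_exp_add_exp_neg (x : ℝ) : 1 ≤ exp x + exp (-x) := by
  rcases le_total 0 x with hx | hx
  · linarith [one_le_exp hx, exp_pos (-x)]
  · linarith [one_le_exp (neg_nonneg.2 hx), exp_pos x]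

lemma measure_univ_le_lintegral_exp_add_lintegral_exp_neg (hu : AEMeasurable u μ) :
    μ univ ≤ (∫⁻ x, ENNReal.ofReal (exp (u x)) ∂μ) + ∫⁻ x, ENNReal.ofReal (exp (-u x)) ∂μ := by
  rw [← lintegral_add_left' (by fun_prop), ← lintegral_one]
  refine lintegral_mono fun x => ?_
  rw [← ENNReal.ofReal_add (exp_pos _).le (exp_pos _).le, ← ENNReal.ofReal_one]
  exact ENNReal.ofReal_le_ofReal (one_le_exp_add_exp_neg (u x))

lemma integrable_of_integrable_exp_of_integrable_exp_neg
    (h₁ : Integrable (fun x => exp (u x)) μ) (h₂ : Integrable (fun x => exp (-u x)) μ) :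
    Integrable u μ := by
  have hIcc : Icc (-1) 1 ⊆ ProbabilityTheory.integrableExpSet u μ :=
    ProbabilityTheory.convex_integrableExpSet.ordConnected.out
      (by simpa [ProbabilityTheory.integrableExpSet] using h₂)
      (by simpa [ProbabilityTheory.integrableExpSet] using h₁)
  refine ProbabilityTheory.integrable_of_mem_interior_integrableExpSet (interior_mono hIcc ?_)
  rw [interior_Icc]
  norm_num

lemma neZero_of_forall_not_ae_eq_const (hu : ∀ c, ¬ u =ᵐ[μ] fun _ => c) : NeZero μ :=
  ⟨fun h0 => hu 0 (by rw [h0, ae_zero]; exact Filter.eventually_bot)⟩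

/-- Jensen's inequality for `exp`, applied to `u` (strictly) and to `-u`. -/
lemma one_lt_average_exp_mul_average_exp_neg [IsFiniteMeasure μ]
    (h₁ : Integrable (fun x => exp (u x)) μ) (h₂ : Integrable (fun x => exp (-u x)) μ)
    (hu : ∀ c, ¬ u =ᵐ[μ] fun _ => c) :
    1 < (⨍ x, exp (u x) ∂μ) * ⨍ x, exp (-u x) ∂μ := by
  have := neZero_of_forall_not_ae_eq_const hu
  have hui := integrable_of_integrable_exp_of_integrable_exp_neg h₁ h₂
  have hlt : exp (⨍ x, u x ∂μ) < ⨍ x, exp (u x) ∂μ :=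
    (strictConvexOn_exp.ae_eq_const_or_map_average_lt continuous_exp.continuousOn isClosed_univ
      (ae_of_all _ fun _ => mem_univ _) hui h₁).resolve_left (hu _)
  have hle : exp (-⨍ x, u x ∂μ) ≤ ⨍ x, exp (-u x) ∂μ := by
    simpa [average_neg] using convexOn_exp.map_average_le continuous_exp.continuousOn
      isClosed_univ (ae_of_all _ fun _ => mem_univ _) hui.neg h₂
  calc (1 : ℝ) = exp (⨍ x, u x ∂μ) * exp (-⨍ x, u x ∂μ) := by
        rw [← exp_add, add_neg_cancel, exp_zero]
    _ < _ := mul_lt_mul hlt hle (exp_pos _) ((exp_pos _).trans hlt).le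

lemma toReal_measure_univ_sq_lt_lintegral_exp_mul_lintegral_exp_neg (hu : AEMeasurable u μ)
    (h₁ : ∫⁻ x, ENNReal.ofReal (exp (u x)) ∂μ < ⊤)
    (h₂ : ∫⁻ x, ENNReal.ofReal (exp (-u x)) ∂μ < ⊤)
    (hc : ∀ c, ¬ u =ᵐ[μ] fun _ => c) :
    (μ univ).toReal ^ 2 <
      (∫⁻ x, ENNReal.ofReal (exp (u x)) ∂μ).toReal *
        (∫⁻ x, ENNReal.ofReal (exp (-u x)) ∂μ).toReal := by
  have : IsFiniteMeasure μ := ⟨(measure_univ_le_lintegral_exp_add_lintegral_exp_neg hu).trans_lt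
    (ENNReal.add_lt_top.2 ⟨h₁, h₂⟩)⟩
  have := neZero_of_forall_not_ae_eq_const hc
  have hμ : 0 < μ.real univ := measureReal_univ_pos
  have hexp : ∀ s : ℝ, ∫⁻ x, ENNReal.ofReal (exp (s * u x)) ∂μ < ⊤ →
      Integrable (fun x => exp (s * u x)) μ ∧
        ∫ x, exp (s * u x) ∂μ = (∫⁻ x, ENNReal.ofReal (exp (s * u x)) ∂μ).toReal := by
    intro s hs
    have hm := (hu.const_mul s).exp.aestronglyMeasurable
    have hpos : 0 ≤ᵐ[μ] fun x => exp (s * u x) := ae_of_all _ fun _ => (exp_pos _).le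
    exact ⟨(lintegral_ofReal_ne_top_iff_integrable hm hpos).1 hs.ne,
      integral_eq_lintegral_of_nonneg_ae hpos hm⟩
  obtain ⟨hi₁, he₁⟩ := hexp 1 (by simpa using h₁)
  obtain ⟨hi₂, he₂⟩ := hexp (-1) (by simpa using h₂)
  have key := one_lt_average_exp_mul_average_exp_neg (by simpa using hi₁) (by simpa using hi₂) hc
  simp only [one_mul, neg_one_mul] at he₁ he₂
  rw [average_eq, average_eq, he₁, he₂, smul_eq_mul, smul_eq_mul] at key
  rw [measureReal_def] at hμ key
  have := mul_lt_mul_of_pos_right key (pow_pos hμ 2)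
  field_simp at this
  linarith

end ExpAndExpNeg

section TruncatedFamily

variable {p d : ℕ} {lam : Measure (EuclideanSpace ℝ (Fin p))}
  {T : EuclideanSpace ℝ (Fin p) → Fin d → ℝ} {h : EuclideanSpace ℝ (Fin p) → ℝ}
  {A : Set (EuclideanSpace ℝ (Fin p))}

/-- The unnormalised member of the truncated family at `m`; tilting it by `exp ⟨a, T⟩` gives
`Z(m + a)`. -/
def truncTilt (lam : Measure (EuclideanSpace ℝ (Fin p)))
    (T : EuclideanSpace ℝ (Fin p) → Fin d → ℝ) (h : EuclideanSpace ℝ (Fin p) → ℝ)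
    (A : Set (EuclideanSpace ℝ (Fin p))) (m : Fin d → ℝ) : Measure (EuclideanSpace ℝ (Fin p)) :=
  (lam.restrict A).withDensity fun x => ENNReal.ofReal (exp (m ⬝ᵥ T x) * h x)

lemma measurable_truncTilt_density (hT : Measurable T) (hh : Measurable h) (m : Fin d → ℝ) :
    Measurable fun x => ENNReal.ofReal (exp (m ⬝ᵥ T x) * h x) :=
  ENNReal.measurable_ofReal.comp ((hT.const_dotProduct m).exp.mul hh)

lemma truncTilt_apply_univ (m : Fin d → ℝ) : truncTilt lam T h A m univ = truncZ lam T h A m := by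
  rw [truncTilt, withDensity_apply _ MeasurableSet.univ, Measure.restrict_univ]
  rfl

lemma truncZ_add_eq_lintegral_truncTilt (hT : Measurable T) (hh : Measurable h)
    (m a : Fin d → ℝ) :
    truncZ lam T h A (m + a) = ∫⁻ x, ENNReal.ofReal (exp (a ⬝ᵥ T x)) ∂truncTilt lam T h A m := by
  rw [truncTilt, lintegral_withDensity_eq_lintegral_mul_non_measurable _
    (measurable_truncTilt_density hT hh m) (ae_of_all _ fun _ => ENNReal.ofReal_lt_top)]
  refine lintegral_congr fun x => ?_
  rw [Pi.mul_apply, ← ENNReal.ofReal_mul' (exp_pos _).le, mul_right_comm, ← exp_add,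
    ← add_dotProduct]
  rfl

lemma truncZ_sub_eq_lintegral_truncTilt (hT : Measurable T) (hh : Measurable h)
    (m a : Fin d → ℝ) :
    truncZ lam T h A (m - a) =
      ∫⁻ x, ENNReal.ofReal (exp (-(a ⬝ᵥ T x))) ∂truncTilt lam T h A m := by
  simp only [sub_eq_add_neg, truncZ_add_eq_lintegral_truncTilt hT hh, neg_dotProduct]

lemma truncZ_le_add_add_sub (hT : Measurable T) (hh : Measurable h) (m a : Fin d → ℝ) :
    truncZ lam T h A m ≤ truncZ lam T h A (m + a) + truncZ lam T h A (m - a) := by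
  rw [← truncTilt_apply_univ, truncZ_add_eq_lintegral_truncTilt hT hh,
    truncZ_sub_eq_lintegral_truncTilt hT hh]
  exact measure_univ_le_lintegral_exp_add_lintegral_exp_neg
    (hT.const_dotProduct a).aemeasurable

lemma not_ae_eq_const_truncTilt (hT : Measurable T) (hh : Measurable h) (hA : MeasurableSet A)
    (hnc : ∀ a : Fin d → ℝ, a ≠ 0 → ∀ b : ℝ,
      0 < lam {x | x ∈ A ∧ 0 < h x ∧ (∑ j, a j * T x j) ≠ b})
    (m : Fin d → ℝ) {a : Fin d → ℝ} (ha : a ≠ 0) (c : ℝ) :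
    ¬ (fun x => a ⬝ᵥ T x) =ᵐ[truncTilt lam T h A m] fun _ => c := by
  intro hc
  rw [Filter.EventuallyEq, truncTilt, ae_withDensity_iff (measurable_truncTilt_density hT hh m),
    ae_restrict_iff' hA, ae_iff] at hc
  refine (hnc a ha c).ne' (measure_mono_null (fun x ⟨hxA, hhx, hne⟩ => ?_) hc)
  exact fun hx => hne (hx hxA (ENNReal.ofReal_pos.2 (mul_pos (exp_pos _) hhx)).ne')

lemma toReal_truncZ_sq_lt (hT : Measurable T) (hh : Measurable h) (hA : MeasurableSet A)
    (hnc : ∀ a : Fin d → ℝ, a ≠ 0 → ∀ b : ℝ,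
      0 < lam {x | x ∈ A ∧ 0 < h x ∧ (∑ j, a j * T x j) ≠ b})
    (m : Fin d → ℝ) {a : Fin d → ℝ} (ha : a ≠ 0)
    (hadd : truncZ lam T h A (m + a) < ⊤) (hsub : truncZ lam T h A (m - a) < ⊤) :
    (truncZ lam T h A m).toReal ^ 2 <
      (truncZ lam T h A (m + a)).toReal * (truncZ lam T h A (m - a)).toReal := by
  rw [truncZ_add_eq_lintegral_truncTilt hT hh] at hadd ⊢
  rw [truncZ_sub_eq_lintegral_truncTilt hT hh] at hsub ⊢
  rw [← truncTilt_apply_univ]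
  exact toReal_measure_univ_sq_lt_lintegral_exp_mul_lintegral_exp_neg
    (hT.const_dotProduct a).aemeasurable hadd hsub
    (not_ae_eq_const_truncTilt hT hh hA hnc m ha)

lemma truncM_eq (P : Measure (EuclideanSpace ℝ (Fin p))) (θ : Fin d → ℝ) :
    truncM lam T h A P θ = θ ⬝ᵥ (fun j => ∫ x in A, T x j ∂P) -
      (P A).toReal * log (truncZ lam T h A θ).toReal :=
  rfl

lemma truncM_add_add_truncM_sub_lt (hT : Measurable T) (hh : Measurable h) (hA : MeasurableSet A)
    (hnc : ∀ a : Fin d → ℝ, a ≠ 0 → ∀ b : ℝ,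
      0 < lam {x | x ∈ A ∧ 0 < h x ∧ (∑ j, a j * T x j) ≠ b})
    {P : Measure (EuclideanSpace ℝ (Fin p))} [IsFiniteMeasure P] (hPA : 0 < P A)
    (m : Fin d → ℝ) {a : Fin d → ℝ} (ha : a ≠ 0)
    (hadd : truncZ lam T h A (m + a) < ⊤) (hsub : truncZ lam T h A (m - a) < ⊤) :
    truncM lam T h A P (m + a) + truncM lam T h A P (m - a) < 2 * truncM lam T h A P m := by
  have hsq := toReal_truncZ_sq_lt hT hh hA hnc m ha hadd hsub
  have hZm : 0 < (truncZ lam T h A m).toReal := by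
    refine ENNReal.toReal_pos ?_ ((truncZ_le_add_add_sub hT hh m a).trans_lt
      (ENNReal.add_lt_top.2 ⟨hadd, hsub⟩)).ne
    rw [← truncTilt_apply_univ]
    exact Measure.measure_univ_ne_zero.2
      (neZero_of_forall_not_ae_eq_const (not_ae_eq_const_truncTilt hT hh hA hnc m ha)).out
  have hprod := (pow_pos hZm 2).trans hsq
  have hlog : 2 * log (truncZ lam T h A m).toReal < log (truncZ lam T h A (m + a)).toReal +
      log (truncZ lam T h A (m - a)).toReal := by
    rw [← log_mul (left_ne_zero_of_mul hprod.ne') (right_ne_zero_of_mul hprod.ne'),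
      ← Nat.cast_ofNat, ← log_pow]
    exact log_lt_log (pow_pos hZm 2) hsq
  have hPA' : 0 < (P A).toReal := ENNReal.toReal_pos hPA.ne' (measure_ne_top P A)
  rw [truncM_eq, truncM_eq, truncM_eq, add_dotProduct, sub_dotProduct]
  linarith [mul_lt_mul_of_pos_left hlog hPA']

end TruncatedFamily

theorem truncM_at_most_one_maximizer_general {p d : ℕ}
    (lam : Measure (EuclideanSpace ℝ (Fin p)))
    (T : EuclideanSpace ℝ (Fin p) → Fin d → ℝ) (h : EuclideanSpace ℝ (Fin p) → ℝ)
    (hT : Measurable T) (hh : Measurable h)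
    (A : Set (EuclideanSpace ℝ (Fin p))) (hA : MeasurableSet A)
    (hnc : ∀ a : Fin d → ℝ, a ≠ 0 → ∀ b : ℝ,
      0 < lam {x | x ∈ A ∧ 0 < h x ∧ (∑ j, a j * T x j) ≠ b})
    (P : Measure (EuclideanSpace ℝ (Fin p))) [IsProbabilityMeasure P]
    (hPA : 0 < P A)
    (θ₁ θ₂ : Fin d → ℝ)
    (hθ₁ : truncZ lam T h A θ₁ < ⊤) (hθ₂ : truncZ lam T h A θ₂ < ⊤)
    (hmax₁ : ∀ θ : Fin d → ℝ, truncZ lam T h A θ < ⊤ →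
      truncM lam T h A P θ ≤ truncM lam T h A P θ₁)
    (hmax₂ : ∀ θ : Fin d → ℝ, truncZ lam T h A θ < ⊤ →
      truncM lam T h A P θ ≤ truncM lam T h A P θ₂) :
    θ₁ = θ₂ := by
  by_contra hne
  set a : Fin d → ℝ := (2 : ℝ)⁻¹ • (θ₁ - θ₂)
  set m := θ₂ + a
  have hθ₁m : m + a = θ₁ := by simp only [m, a]; module
  have hθ₂m : m - a = θ₂ := add_sub_cancel_right θ₂ a
  have ha : a ≠ 0 := smul_ne_zero (by norm_num) (sub_ne_zero.2 hne)
  have hlt := truncM_add_add_truncM_sub_lt hT hh hA hnc hPA m ha (hθ₁m ▸ hθ₁) (hθ₂m ▸ hθ₂)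
  rw [hθ₁m, hθ₂m] at hlt
  have hm : truncZ lam T h A m < ⊤ := (truncZ_le_add_add_sub hT hh m a).trans_lt
    (by rw [hθ₁m, hθ₂m]; exact ENNReal.add_lt_top.2 ⟨hθ₁, hθ₂⟩)
  linarith [hmax₁ m hm, hmax₂ m hm]

theorem truncM_at_most_one_maximizer {p d : ℕ}
    (lam : Measure (EuclideanSpace ℝ (Fin p))) [SigmaFinite lam]
    (T : EuclideanSpace ℝ (Fin p) → Fin d → ℝ) (h : EuclideanSpace ℝ (Fin p) → ℝ)
    (hT : Measurable T) (hh : Measurable h) (hh0 : 0 ≤ h)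
    (A : Set (EuclideanSpace ℝ (Fin p))) (hA : MeasurableSet A)
    (hnc : ∀ a : Fin d → ℝ, a ≠ 0 → ∀ b : ℝ,
      0 < lam {x | x ∈ A ∧ 0 < h x ∧ (∑ j, a j * T x j) ≠ b})
    (P : Measure (EuclideanSpace ℝ (Fin p))) [IsProbabilityMeasure P]
    (hPA : 0 < P A)
    (hint : ∀ j, IntegrableOn (fun x => T x j) A P)
    (θ₁ θ₂ : Fin d → ℝ)
    (hθ₁ : truncZ lam T h A θ₁ < ⊤) (hθ₂ : truncZ lam T h A θ₂ < ⊤)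
    (hmax₁ : ∀ θ : Fin d → ℝ, truncZ lam T h A θ < ⊤ →
      truncM lam T h A P θ ≤ truncM lam T h A P θ₁)
    (hmax₂ : ∀ θ : Fin d → ℝ, truncZ lam T h A θ < ⊤ →
      truncM lam T h A P θ ≤ truncM lam T h A P θ₂) :
    θ₁ = θ₂ :=
  truncM_at_most_one_maximizer_general lam T h hT hh A hA hnc P hPA θ₁ θ₂ hθ₁ hθ₂ hmax₁ hmax₂
end
end
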